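/- arXiv:2007.04286 — 4 statements merged into one kernel-verified Lean document; each statement's English description precedes it below -/
import Mathlib

section
/- Let H be a real Hilbert space, let U and P be continuous linear operators on H with P idempotent (P ∘ P = P), and set Q = I - P. Then for every natural number i, P U^{i+1} = \sum_{k=0}^{i} P U^{i-k} (P U) (Q U)^{k}; in particular, P annihilates the orthogonal-dynamics term: P (Q U)^{i+1} = 0. -/
/-! Splitting `U = P U + Q U` and expanding `U^(i+1)` by peeling off one factor `P U` at a time
gives the Dyson identity `U^(i+1) = ∑ₖ U^(i-k) (P U) (Q U)^k + (Q U)^(i+1)`, valid in any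
semiring. Since `P Q = P (1 - P) = 0`, left multiplication by `P` kills the remainder. -/

open Finset

theorem add_pow_succ_eq_sum_add_pow {R : Type*} [Semiring R] (A B : R) (n : ℕ) :
    (A + B) ^ (n + 1) = ∑ k ∈ range (n + 1), (A + B) ^ (n - k) * A * B ^ k + B ^ (n + 1) := by
  induction n with
  | zero => simp
  | succ n ih =>
    calc (A + B) ^ (n + 2) = (A + B) ^ (n + 1) * B + (A + B) ^ (n + 1) * A := by
          rw [pow_succ _ (n + 1), mul_add, add_comm]
      _ = (∑ k ∈ range (n + 1), (A + B) ^ (n - k) * A * B ^ (k + 1) + B ^ (n + 2))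
            + (A + B) ^ (n + 1) * A := by
          simp only [ih, add_mul, sum_mul, mul_assoc, ← pow_succ]
      _ = ∑ k ∈ range (n + 2), (A + B) ^ (n + 1 - k) * A * B ^ k + B ^ (n + 2) := by
          rw [sum_range_succ' (fun k ↦ (A + B) ^ (n + 1 - k) * A * B ^ k) (n + 1)]
          simp only [Nat.add_sub_add_right, Nat.sub_zero, pow_zero, mul_one]
          abel

theorem mul_mul_pow_succ_eq_zero {M : Type*} [MonoidWithZero M] {P Q : M} (h : P * Q = 0)
    (U : M) (n : ℕ) : P * (Q * U) ^ (n + 1) = 0 := by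
  rw [pow_succ', ← mul_assoc, ← mul_assoc, h, zero_mul, zero_mul]

theorem projected_dyson_formula_general
    {H : Type*} [NormedAddCommGroup H] [InnerProductSpace ℝ H]
    (U P : H →L[ℝ] H) (hP : P * P = P) (Q : H →L[ℝ] H) (hQ : Q = 1 - P) (i : ℕ) :
    P * U ^ (i + 1) =
      ∑ k ∈ Finset.range (i + 1), P * (U ^ (i - k) * (P * U) * (Q * U) ^ k)
    ∧ P * (Q * U) ^ (i + 1) = 0 := by
  have hPQ : P * Q = 0 := hQ ▸ IsIdempotentElem.mul_one_sub_self hP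
  have hU : P * U + Q * U = U := by rw [← add_mul, hQ, add_sub_cancel, one_mul]
  have hDyson := add_pow_succ_eq_sum_add_pow (P * U) (Q * U) i
  rw [hU] at hDyson
  have hRem := mul_mul_pow_succ_eq_zero hPQ U i
  refine ⟨?_, hRem⟩
  rw [hDyson, mul_add, hRem, add_zero, mul_sum]

/-- **Projected Mori–Zwanzig (Dyson) decomposition.** For continuous linear operators
`U` and `P` on a real Hilbert space `H`, with `P` idempotent and `Q = I - P`, one has
for every natural number `i`:
`P U^(i+1) = ∑_{k=0}^{i} P U^(i-k) (P U) (Q U)^k`, and in particular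
`P (Q U)^(i+1) = 0`. -/
theorem projected_dyson_formula
    {H : Type*} [NormedAddCommGroup H] [InnerProductSpace ℝ H] [CompleteSpace H]
    (U P : H →L[ℝ] H) (hP : P * P = P) (Q : H →L[ℝ] H) (hQ : Q = 1 - P) (i : ℕ) :
    P * U ^ (i + 1) =
      ∑ k ∈ Finset.range (i + 1), P * (U ^ (i - k) * (P * U) * (Q * U) ^ k)
    ∧ P * (Q * U) ^ (i + 1) = 0 :=
  projected_dyson_formula_general U P hP Q hQ i
end

section
/- Let (Ω, ℱ, μ) be a probability space and Φ : Ω → Ω a measurable, measure-preserving map, so that the Koopman operator U : L²(μ) → L²(μ), defined by U f = f ∘ Φ, is a well-defined linear isometry. Let P be the orthogonal projection of L²(μ) onto a closed subspace S, and Q = I - P. Then for every X ∈ L²(μ) and every natural number i, the discrete Mori–Zwanzig equation U^{i+1} X = \sum_{k=0}^{i} U^{i-k} (P U) (Q U)^{k} X + (Q U)^{i+1} X holds in L²(μ). -/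
/-!
The equation is an identity in the ring of operators. Since `P + Q = 1`, `U = PU + QU`; splitting
the rightmost factor of `U^(n+1) = U^n (PU + QU)` and iterating on the `(QU)`-tail yields the sum,
one term for each position of the rightmost `PU`.
-/

open MeasureTheory Finset

theorem pow_succ_eq_sum_mul_add_pow_of_add_eq {R : Type*} [Semiring R] {u a b : R}
    (h : a + b = u) (n : ℕ) :
    u ^ (n + 1) = ∑ k ∈ range (n + 1), u ^ (n - k) * a * b ^ k + b ^ (n + 1) := by
  induction n with
  | zero => simp [h]
  | succ n ih =>
    calc u ^ (n + 2) = u ^ (n + 1) * a + u ^ (n + 1) * b := by rw [← mul_add, h, pow_succ]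
      _ = u ^ (n + 1) * a + (∑ k ∈ range (n + 1), u ^ (n - k) * a * b ^ (k + 1) + b ^ (n + 2)) := by
        congr 1
        rw [ih, add_mul, sum_mul]
        simp only [mul_assoc, ← pow_succ]
      _ = ∑ k ∈ range (n + 2), u ^ (n + 1 - k) * a * b ^ k + b ^ (n + 2) := by
        rw [sum_range_succ' _ (n + 1)]
        simp only [Nat.add_sub_add_right, Nat.sub_zero, pow_zero, mul_one]
        abel

theorem discrete_mori_zwanzig_general
    {Ω : Type*} [MeasurableSpace Ω] (μ : Measure Ω)
    (U : Lp ℝ 2 μ →L[ℝ] Lp ℝ 2 μ)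
    (P Q : Lp ℝ 2 μ →L[ℝ] Lp ℝ 2 μ)
    (hQ : Q = 1 - P)
    (X : Lp ℝ 2 μ) (i : ℕ) :
    (U ^ (i + 1)) X =
      (∑ k ∈ Finset.range (i + 1), (U ^ (i - k) * (P * U) * (Q * U) ^ k) X)
        + ((Q * U) ^ (i + 1)) X := by
  have hPQ : P * U + Q * U = U := by rw [hQ, ← add_mul, add_sub_cancel, one_mul]
  rw [pow_succ_eq_sum_mul_add_pow_of_add_eq hPQ i, add_apply, _root_.sum_apply]

/-- **Discrete Mori–Zwanzig equation.** Let `(Ω, ℱ, μ)` be a probability space,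
`Φ : Ω → Ω` a measurable measure-preserving map, and `U` the Koopman operator on
`L²(μ)`, `U f = f ∘ Φ`. Let `P` be the orthogonal projection of `L²(μ)` onto a
closed subspace `S` and `Q = I - P`. Then for every `X ∈ L²(μ)` and every `i ∈ ℕ`,
`U^(i+1) X = ∑_{k=0}^{i} U^(i-k) (P U) (Q U)^k X + (Q U)^(i+1) X` in `L²(μ)`. -/
theorem discrete_mori_zwanzig
    {Ω : Type*} [MeasurableSpace Ω] (μ : Measure Ω) [IsProbabilityMeasure μ]
    (Φ : Ω → Ω) (hΦ : MeasurePreserving Φ μ μ)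
    (U : Lp ℝ 2 μ →L[ℝ] Lp ℝ 2 μ)
    (hU : ∀ f : Lp ℝ 2 μ, (U f : Ω → ℝ) =ᵐ[μ] fun ω => f (Φ ω))
    (S : Submodule ℝ (Lp ℝ 2 μ)) [S.HasOrthogonalProjection]
    (P Q : Lp ℝ 2 μ →L[ℝ] Lp ℝ 2 μ)
    (hP : P = S.subtypeL.comp S.orthogonalProjectionOnto) (hQ : Q = 1 - P)
    (X : Lp ℝ 2 μ) (i : ℕ) :
    (U ^ (i + 1)) X =
      (∑ k ∈ Finset.range (i + 1), (U ^ (i - k) * (P * U) * (Q * U) ^ k) X)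
        + ((Q * U) ^ (i + 1)) X :=
  discrete_mori_zwanzig_general μ U P Q hQ X i
end

section
/- Let H and 𝓗 be real Hilbert spaces, K : H → 𝓗 a bounded linear operator with adjoint K*, (φ_j)_{j∈ℕ} an orthonormal family in H, and (λ_j)_{j∈ℕ} strictly positive real numbers with K* K φ_j = λ_j φ_j for every j. Let (c_j)_{j∈ℕ} be real numbers with \sum_j c_j² / λ_j < ∞. Then the series f = \sum_j c_j φ_j converges in H, the series 𝒩 f = \sum_j (c_j / λ_j) K φ_j converges in 𝓗, and K* applied to 𝒩 f recovers f: K* (\sum_j (c_j / λ_j) K φ_j) = \sum_j c_j φ_j. That is, K* is a left inverse of the Nyström operator 𝒩 on its domain. -/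
/-!
The vectors `K φ_j` are pairwise orthogonal with `‖K φ_j‖² = ⟪φ_j, K* K φ_j⟫ = λ_j`, so the
terms of `∑_j (c_j / λ_j) K φ_j` are orthogonal with squared norms `c_j² / λ_j`; in a Hilbert
space such a series converges. Applying the continuous map `K*` termwise turns it into
`∑_j c_j φ_j`, which therefore converges as well, to `K*` of the first sum.
-/

open ContinuousLinearMap RealInnerProductSpace

theorem summable_of_pairwise_inner_eq_zero {ι 𝕜 E : Type*} [RCLike 𝕜] [NormedAddCommGroup E]
    [InnerProductSpace 𝕜 E] [CompleteSpace E] {x : ι → E}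
    (hx : Pairwise fun i j => inner 𝕜 (x i) (x j) = 0) (h : Summable fun i => ‖x i‖ ^ 2) :
    Summable x := by
  let V : ι → Submodule 𝕜 E := fun i => Submodule.span 𝕜 {x i}
  have hV : OrthogonalFamily 𝕜 (fun i => V i) fun i => (V i).subtypeₗᵢ :=
    OrthogonalFamily.of_pairwise fun i j hij =>
      Submodule.isOrtho_span.mpr <| by simpa using hx hij
  exact (hV.summable_iff_norm_sq_summable
    fun i => ⟨x i, Submodule.mem_span_singleton_self (x i)⟩).mpr h

theorem inner_map_map_of_adjoint_apply_eq_smul {𝕜 E F : Type*} [RCLike 𝕜]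
    [NormedAddCommGroup E] [InnerProductSpace 𝕜 E] [CompleteSpace E]
    [NormedAddCommGroup F] [InnerProductSpace 𝕜 F] [CompleteSpace F]
    {K : E →L[𝕜] F} {v : E} {μ : 𝕜} (h : adjoint K (K v) = μ • v) (u : E) :
    inner 𝕜 (K u) (K v) = μ * inner 𝕜 u v := by
  rw [← adjoint_inner_right, h, inner_smul_right]

/-- Let `K : H → 𝓗` be a bounded linear operator between real Hilbert spaces with
adjoint `K*`, `(φ_j)` an orthonormal family in `H`, and `(λ_j)` strictly positive reals
with `K* K φ_j = λ_j φ_j`. If `∑_j c_j²/λ_j < ∞`, then `f = ∑_j c_j φ_j` converges in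
`H`, `𝒩 f = ∑_j (c_j/λ_j) K φ_j` converges in `𝓗`, and `K* (𝒩 f) = f`: the adjoint
`K*` is a left inverse of the Nyström operator on its domain. -/
theorem adjoint_left_inverse_nystrom
    {H 𝓗 : Type*} [NormedAddCommGroup H] [InnerProductSpace ℝ H] [CompleteSpace H]
    [NormedAddCommGroup 𝓗] [InnerProductSpace ℝ 𝓗] [CompleteSpace 𝓗]
    (K : H →L[ℝ] 𝓗) (φ : ℕ → H) (hφ : Orthonormal ℝ φ)
    (lam : ℕ → ℝ) (hlam : ∀ j, 0 < lam j)
    (heig : ∀ j, (adjoint K) (K (φ j)) = lam j • φ j)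
    (c : ℕ → ℝ) (hc : Summable fun j => c j ^ 2 / lam j) :
    (Summable fun j => c j • φ j) ∧
    (Summable fun j => (c j / lam j) • K (φ j)) ∧
    (adjoint K) (∑' j, (c j / lam j) • K (φ j)) = ∑' j, c j • φ j := by
  have hortho : Pairwise fun i j => ⟪(c i / lam i) • K (φ i), (c j / lam j) • K (φ j)⟫ = 0 :=
    fun i j hij => by
      simp [real_inner_smul_left, real_inner_smul_right,
        inner_map_map_of_adjoint_apply_eq_smul (heig j), hφ.2 hij]
  have hnorm : ∀ j, ‖(c j / lam j) • K (φ j)‖ ^ 2 = c j ^ 2 / lam j := fun j => by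
    rw [← real_inner_self_eq_norm_sq, real_inner_smul_left, real_inner_smul_right,
      inner_map_map_of_adjoint_apply_eq_smul (heig j), real_inner_self_eq_norm_sq, hφ.1 j]
    field_simp [(hlam j).ne']
  have hKφ : Summable fun j => (c j / lam j) • K (φ j) :=
    summable_of_pairwise_inner_eq_zero hortho (by simpa only [hnorm] using hc)
  have hadj : ∀ j, adjoint K ((c j / lam j) • K (φ j)) = c j • φ j := fun j => by
    rw [map_smul, heig j, smul_smul, div_mul_cancel₀ _ (hlam j).ne']
  refine ⟨?_, hKφ, ?_⟩
  · simpa only [hadj] using hKφ.mapL (adjoint K)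
  · simp only [(adjoint K).map_tsum hKφ, hadj]
end

section
/- Let Ω be a measurable space, Φ : Ω → Ω a measurable map, X : Ω → ℝⁿ a (Borel) measurable observable, and m ≥ 1. Define the delay-coordinate map 𝕏_m : Ω → (ℝⁿ)^m by 𝕏_m(ω) = (X(ω), X(Φ(ω)), …, X(Φ^{m−1}(ω))). If 𝕏_m is a measurable embedding (injective, measurable, mapping measurable sets to measurable sets), then there exists a Borel measurable function M_0 : (ℝⁿ)^m → ℝⁿ such that X(Φ^m(ω)) = M_0(𝕏_m(ω)) for every ω ∈ Ω. Consequently, the time series x_i := X(Φ^i(ω)) satisfies the Markovian closure x_{i+m} = M_0(x_i, x_{i+1}, …, x_{i+m−1}) for all i ≥ 0 and all ω ∈ Ω. -/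
/-! Since the delay map is a measurable embedding, the measurable observable `X ∘ Φ^[m]`
factors measurably through it; evaluating the factorization at `Φ^[i] ω`, whose delay
coordinates are `X (Φ^[i + k] ω)`, gives the closure along every orbit. -/

theorem MeasurableEmbedding.exists_measurable_factor {α β γ : Type*} [MeasurableSpace α]
    [MeasurableSpace β] [MeasurableSpace γ] [Nonempty γ] {e : α → β}
    (he : MeasurableEmbedding e) {g : α → γ} (hg : Measurable g) :
    ∃ F : β → γ, Measurable F ∧ ∀ a, g a = F (e a) := by
  obtain ⟨F, hF, hFe⟩ := he.exists_measurable_extend hg fun _ => inferInstance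
  exact ⟨F, hF, fun a => (congrFun hFe a).symm⟩

theorem delay_embedding_markovian_closure_general
    {Ω : Type*} [MeasurableSpace Ω] (n : ℕ)
    (Φ : Ω → Ω) (hΦ : Measurable Φ)
    (X : Ω → (Fin n → ℝ)) (hX : Measurable X)
    (m : ℕ)
    (DX : Ω → Fin m → (Fin n → ℝ)) (hDX : DX = fun ω (i : Fin m) => X (Φ^[(i : ℕ)] ω))
    (hemb : MeasurableEmbedding DX) :
    ∃ M₀ : (Fin m → (Fin n → ℝ)) → (Fin n → ℝ), Measurable M₀ ∧
      (∀ ω, X (Φ^[m] ω) = M₀ (DX ω)) ∧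
      (∀ (ω : Ω) (i : ℕ), X (Φ^[i + m] ω) = M₀ (fun k => X (Φ^[i + (k : ℕ)] ω))) := by
  obtain ⟨M₀, hM₀, hfactor⟩ := hemb.exists_measurable_factor (hX.comp (hΦ.iterate m))
  refine ⟨M₀, hM₀, hfactor, fun ω i => ?_⟩
  subst hDX
  simpa only [Function.comp_apply, ← Function.iterate_add_apply, add_comm] using hfactor (Φ^[i] ω)

/-- **Markovian closure under delay embedding.** Let `Φ : Ω → Ω` be measurable,
`X : Ω → ℝⁿ` a measurable observable, and `m ≥ 1`. Define the delay-coordinate map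
`𝕏_m(ω) = (X(ω), X(Φω), …, X(Φ^{m−1}ω))`. If `𝕏_m` is a measurable embedding, then
there is a Borel measurable `M₀ : (ℝⁿ)^m → ℝⁿ` with `X(Φ^m ω) = M₀(𝕏_m ω)` for all
`ω`; consequently the time series `x_i = X(Φ^i ω)` satisfies the Markovian closure
`x_{i+m} = M₀(x_i, …, x_{i+m−1})` for all `i` and all `ω`. -/
theorem delay_embedding_markovian_closure
    {Ω : Type*} [MeasurableSpace Ω] (n : ℕ)
    (Φ : Ω → Ω) (hΦ : Measurable Φ)
    (X : Ω → (Fin n → ℝ)) (hX : Measurable X)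
    (m : ℕ) (hm : 1 ≤ m)
    (DX : Ω → Fin m → (Fin n → ℝ)) (hDX : DX = fun ω (i : Fin m) => X (Φ^[(i : ℕ)] ω))
    (hemb : MeasurableEmbedding DX) :
    ∃ M₀ : (Fin m → (Fin n → ℝ)) → (Fin n → ℝ), Measurable M₀ ∧
      (∀ ω, X (Φ^[m] ω) = M₀ (DX ω)) ∧
      (∀ (ω : Ω) (i : ℕ), X (Φ^[i + m] ω) = M₀ (fun k => X (Φ^[i + (k : ℕ)] ω))) :=
  delay_embedding_markovian_closure_general n Φ hΦ X hX m DX hDX hemb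
end
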